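/- Let K = ℚ(i), O = ℤ[i], and Γ = SL₂(ℤ[i]). Set S = [[0,−1],[1,0]], T = [[1,1],[0,1]], T_ω = [[1,i],[0,1]], L = [[i,0],[0,−i]], U = TS, and E = T_ω·S·L. Then for every integer k ≥ 0, the subspace V^S + V^{SL} + V^U + V^E of V_{k,k}(ℂ) (the sum of the fixed subspaces of S, SL, U and E under the right action of Γ) is contained in the kernel of the Manin map Φ; that is, Φ(v) = 0 for every v in this sum. -/

import Mathlib

/-!
If `g ∈ Γ` fixes `v`, then in the coinvariants `[m ⊗ v] = [m·g ⊗ v]` for every modular symbol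
`m`. The matrices `S` and `SL` swap the cusps `0` and `∞`, so `{0,∞}·g = {∞,0} = -{0,∞}` and
`Φ(v) = -Φ(v)`. The matrices `U` and `E` permute `0`, `∞` and a third cusp (`1`, resp. `i`)
cyclically, so `Φ(v)` equals the classes of the other two sides of the triangle `{0,∞,p}`;
by the three-term relation the three classes sum to zero, hence `3 Φ(v) = 0`. Since `Φ` is
linear, it vanishes on the whole sum of fixed subspaces.
-/

open MvPolynomial
open scoped TensorProduct

set_option synthInstance.maxHeartbeats 1000000
set_option maxHeartbeats 1000000

noncomputable section

variable (K : Subfield ℂ)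

/-- The projective line `P¹(K)` over the field `K`. -/
abbrev ProjLine := Projectivization K (Fin 2 → K)

/-- The injective linear map on `Fin 2 → K` attached to `g ∈ SL₂(K)`. -/
lemma toLin'_inj (g : Matrix.SpecialLinearGroup (Fin 2) K) :
    Function.Injective (Matrix.toLin' (g : Matrix (Fin 2) (Fin 2) K)) := by
  intro x y hxy
  have h2 := congrArg (Matrix.toLin' ((g⁻¹ : Matrix.SpecialLinearGroup (Fin 2) K) :
      Matrix (Fin 2) (Fin 2) K)) hxy
  rwa [← Matrix.toLin'_mul_apply, ← Matrix.toLin'_mul_apply, ← Matrix.SpecialLinearGroup.coe_mul,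
      inv_mul_cancel, Matrix.SpecialLinearGroup.coe_one, Matrix.toLin'_one,
      LinearMap.id_apply, LinearMap.id_apply] at h2

/-- The (left) action of `SL₂(K)` on `P¹(K)` by fractional linear transformations,
i.e. via the projectivization of the linear action on `K²`. -/
def projAct (g : Matrix.SpecialLinearGroup (Fin 2) K) : ProjLine K → ProjLine K :=
  Projectivization.map (Matrix.toLin' (g : Matrix (Fin 2) (Fin 2) K)) (toLin'_inj K g)

/-- The generating relations for the space of weight-2 modular symbols: all elements
`{α,β} + {β,α}` and `{α,β} + {β,γ} + {γ,α}` of the free `ℂ`-vector space on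
`P¹(K) × P¹(K)`. -/
def relSet : Set ((ProjLine K × ProjLine K) →₀ ℂ) :=
  {x | ∃ α β : ProjLine K,
        x = Finsupp.single (α, β) 1 + Finsupp.single (β, α) 1} ∪
  {x | ∃ α β γ : ProjLine K,
        x = Finsupp.single (α, β) 1 + Finsupp.single (β, γ) 1 + Finsupp.single (γ, α) 1}

/-- The subspace spanned by the modular-symbol relations. -/
def relSub : Submodule ℂ ((ProjLine K × ProjLine K) →₀ ℂ) :=
  Submodule.span ℂ (relSet K)

/-- The space `M₂` of weight-2 modular symbols over `K`. -/
def ModSymb := ((ProjLine K × ProjLine K) →₀ ℂ) ⧸ relSub K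

instance : AddCommGroup (ModSymb K) := by unfold ModSymb; infer_instance
instance : Module ℂ (ModSymb K) := by unfold ModSymb; infer_instance

/-- The right action of `g ∈ SL₂(K)` on the free vector space on pairs of points of
`P¹(K)`, with `{α,β}·g = {g⁻¹α, g⁻¹β}`. -/
def symbAct₀ (g : Matrix.SpecialLinearGroup (Fin 2) K) :
    ((ProjLine K × ProjLine K) →₀ ℂ) →ₗ[ℂ] ((ProjLine K × ProjLine K) →₀ ℂ) :=
  Finsupp.lmapDomain ℂ ℂ (fun p => (projAct K g⁻¹ p.1, projAct K g⁻¹ p.2))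

lemma symbAct₀_rel_le (g : Matrix.SpecialLinearGroup (Fin 2) K) :
    relSub K ≤ Submodule.comap (symbAct₀ K g) (relSub K) := by
  rw [relSub, Submodule.span_le]
  rintro x (⟨α, β, rfl⟩ | ⟨α, β, γ, rfl⟩) <;>
    refine Submodule.mem_comap.mpr (Submodule.subset_span ?_)
  · exact Or.inl ⟨projAct K g⁻¹ α, projAct K g⁻¹ β, by
      simp [symbAct₀, Finsupp.mapDomain_add, Finsupp.mapDomain_single]⟩
  · exact Or.inr ⟨projAct K g⁻¹ α, projAct K g⁻¹ β, projAct K g⁻¹ γ, by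
      simp [symbAct₀, Finsupp.mapDomain_add, Finsupp.mapDomain_single]⟩

/-- The right action of `g ∈ SL₂(K)` on the space of modular symbols. -/
def symbAct (g : Matrix.SpecialLinearGroup (Fin 2) K) : ModSymb K →ₗ[ℂ] ModSymb K :=
  Submodule.mapQ (relSub K) (relSub K) (symbAct₀ K g) (symbAct₀_rel_le K g)

/-- Right action of a `2×2` complex matrix `g = [[a,b],[c,d]]` on polynomials in
`X = X 0`, `Y = X 1`, `X̄ = X 2`, `Ȳ = X 3`, by the substitution
`X ↦ aX+bY`, `Y ↦ cX+dY`, `X̄ ↦ conj a X̄ + conj b Ȳ`, `Ȳ ↦ conj c X̄ + conj d Ȳ`. -/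
def polySubst (g : Matrix (Fin 2) (Fin 2) ℂ) : Fin 4 → MvPolynomial (Fin 4) ℂ :=
  ![C (g 0 0) * X 0 + C (g 0 1) * X 1,
    C (g 1 0) * X 0 + C (g 1 1) * X 1,
    C ((starRingEnd ℂ) (g 0 0)) * X 2 + C ((starRingEnd ℂ) (g 0 1)) * X 3,
    C ((starRingEnd ℂ) (g 1 0)) * X 2 + C ((starRingEnd ℂ) (g 1 1)) * X 3]

def matAct (g : Matrix (Fin 2) (Fin 2) ℂ) : Module.End ℂ (MvPolynomial (Fin 4) ℂ) :=
  (aeval (polySubst g)).toLinearMap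

/-- The subspace `V_{k,k}(ℂ)`: polynomials homogeneous of degree `k` in the pair `(X,Y)`
and homogeneous of degree `k` in the pair `(X̄,Ȳ)`. -/
def Vkk (k : ℕ) : Submodule ℂ (MvPolynomial (Fin 4) ℂ) :=
  weightedHomogeneousSubmodule ℂ ![1, 1, 0, 0] k ⊓ weightedHomogeneousSubmodule ℂ ![0, 0, 1, 1] k

lemma iwh_pow {w : Fin 4 → ℕ} {φ : MvPolynomial (Fin 4) ℂ} {m : ℕ}
    (h : φ.IsWeightedHomogeneous w m) (n : ℕ) :
    (φ ^ n).IsWeightedHomogeneous w (n * m) := by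
  induction n with
  | zero => simpa using isWeightedHomogeneous_one ℂ w
  | succ n ih =>
      rw [pow_succ, Nat.succ_mul]
      exact ih.mul h

lemma iwh_aeval (w : Fin 4 → ℕ) (f : Fin 4 → MvPolynomial (Fin 4) ℂ)
    (hf : ∀ i, (f i).IsWeightedHomogeneous w (w i))
    {k : ℕ} {P : MvPolynomial (Fin 4) ℂ} (hP : P.IsWeightedHomogeneous w k) :
    (aeval f P).IsWeightedHomogeneous w k := by
  classical
  rw [P.as_sum, map_sum]
  apply IsWeightedHomogeneous.sum
  intro m hm
  rw [aeval_monomial]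
  have h1 : ((algebraMap ℂ (MvPolynomial (Fin 4) ℂ)) (coeff m P)).IsWeightedHomogeneous w 0 :=
    isWeightedHomogeneous_C w _
  have h2 : (∏ i ∈ m.support, f i ^ m i).IsWeightedHomogeneous w
      (∑ i ∈ m.support, m i * w i) :=
    IsWeightedHomogeneous.prod m.support _ _ (fun i _ => iwh_pow (hf i) (m i))
  have h3 := h1.mul h2
  rw [zero_add] at h3
  have hk : (∑ i ∈ m.support, m i * w i) = k := by
    have := hP (MvPolynomial.mem_support_iff.mp hm)
    rw [← this, Finsupp.weight_apply, Finsupp.sum]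
    simp [smul_eq_mul]
  rwa [hk] at h3

lemma iwh_lin (w : Fin 4 → ℕ) (a b : ℂ) (i j : Fin 4) (n : ℕ) (hi : w i = n) (hj : w j = n) :
    IsWeightedHomogeneous w (C a * X i + C b * X j) n := by
  have h1 := (isWeightedHomogeneous_C (R := ℂ) w a).mul (isWeightedHomogeneous_X ℂ w i)
  have h2 := (isWeightedHomogeneous_C (R := ℂ) w b).mul (isWeightedHomogeneous_X ℂ w j)
  rw [zero_add, hi] at h1
  rw [zero_add, hj] at h2
  exact h1.add h2

lemma polySubst_iwh (g : Matrix (Fin 2) (Fin 2) ℂ) (w : Fin 4 → ℕ)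
    (hw : w = ![1, 1, 0, 0] ∨ w = ![0, 0, 1, 1]) (i : Fin 4) :
    (polySubst g i).IsWeightedHomogeneous w (w i) := by
  rcases hw with rfl | rfl <;> fin_cases i <;>
    · simp only [polySubst, Matrix.cons_val_zero, Matrix.cons_val_one, Matrix.head_cons,
        Matrix.cons_val_two, Matrix.tail_cons, Matrix.cons_val_three]
      apply iwh_lin <;> decide

/-- The action of a complex matrix preserves `V_{k,k}(ℂ)`. -/
lemma matAct_mem_Vkk (g : Matrix (Fin 2) (Fin 2) ℂ) {k : ℕ} {P : MvPolynomial (Fin 4) ℂ}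
    (hP : P ∈ Vkk k) : matAct g P ∈ Vkk k :=
  ⟨iwh_aeval _ _ (polySubst_iwh g _ (Or.inl rfl)) hP.1,
   iwh_aeval _ _ (polySubst_iwh g _ (Or.inr rfl)) hP.2⟩

/-- The complex matrix attached to an element of `SL₂(K)` via the inclusion `K ⊆ ℂ`. -/
def cmat (g : Matrix.SpecialLinearGroup (Fin 2) K) : Matrix (Fin 2) (Fin 2) ℂ :=
  fun i j => ((g : Matrix (Fin 2) (Fin 2) K) i j : ℂ)

variable (k : ℕ)

/-- The right action of `g ∈ SL₂(K)` on `V_{k,k}(ℂ)`. -/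
def vAct (g : Matrix.SpecialLinearGroup (Fin 2) K) : Vkk k →ₗ[ℂ] Vkk k :=
  (matAct (cmat K g)).restrict (fun _ hx => matAct_mem_Vkk _ hx)

/-- The underlying space `M₂ ⊗ V_{k,k}(ℂ)`. -/
def MV := ModSymb K ⊗[ℂ] Vkk k

instance : AddCommGroup (MV K k) := by unfold MV; infer_instance
instance : Module ℂ (MV K k) := by unfold MV; infer_instance

/-- The diagonal right action of `g ∈ SL₂(K)` on `M₂ ⊗ V_{k,k}(ℂ)`. -/
def diagAct (g : Matrix.SpecialLinearGroup (Fin 2) K) : MV K k →ₗ[ℂ] MV K k :=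
  TensorProduct.map (symbAct K g) (vAct K k g)

/-- The subspace of `M₂ ⊗ V_{k,k}(ℂ)` spanned by the elements `u − u·γ`, for `γ` in the
subgroup of `SL₂(K)` cut out by the predicate `pred` (e.g. `γ ∈ SL₂(O)`). -/
def coinvSub (pred : Matrix.SpecialLinearGroup (Fin 2) K → Prop) :
    Submodule ℂ (MV K k) :=
  Submodule.span ℂ {x | ∃ g, pred g ∧ ∃ u, x = u - diagAct K k g u}

/-- The space of coinvariants `(M₂ ⊗ V_{k,k}(ℂ))_Γ`. -/
def Coinv (pred : Matrix.SpecialLinearGroup (Fin 2) K → Prop) :=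
  MV K k ⧸ coinvSub K k pred

instance (pred : Matrix.SpecialLinearGroup (Fin 2) K → Prop) :
    AddCommGroup (Coinv K k pred) := by unfold Coinv; infer_instance
instance (pred : Matrix.SpecialLinearGroup (Fin 2) K → Prop) :
    Module ℂ (Coinv K k pred) := by unfold Coinv; infer_instance

/-- The point `0 = [0 : 1]` of `P¹(K)`. -/
def pt0 : ProjLine K :=
  Projectivization.mk K ![0, 1] (by intro h; simpa using congrFun h 1)

/-- The point `∞ = [1 : 0]` of `P¹(K)`. -/
def ptInf : ProjLine K :=
  Projectivization.mk K ![1, 0] (by intro h; simpa using congrFun h 0)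

/-- The modular symbol `{0, ∞} ∈ M₂`. -/
def symb0inf : ModSymb K :=
  Submodule.Quotient.mk (Finsupp.single (pt0 K, ptInf K) (1 : ℂ))

/-- The Manin map `Φ : V_{k,k}(ℂ) → (M₂ ⊗ V_{k,k}(ℂ))_Γ`, `v ↦ [{0,∞} ⊗ v]`. -/
def ManinPhi (pred : Matrix.SpecialLinearGroup (Fin 2) K → Prop) (v : Vkk k) :
    Coinv K k pred :=
  Submodule.Quotient.mk ((symb0inf K ⊗ₜ[ℂ] v : ModSymb K ⊗[ℂ] Vkk k) : MV K k)


namespace Stmt18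

/-- `K = ℚ(i)` as a subfield of `ℂ`. -/
def K1 : Subfield ℂ := Subfield.closure {Complex.I}

/-- `i` as an element of `K`. -/
def iK : K1 := ⟨Complex.I, Subfield.subset_closure (Set.mem_singleton _)⟩

def S : Matrix.SpecialLinearGroup (Fin 2) K1 :=
  ⟨!![0, -1; 1, 0], by simp [Matrix.det_fin_two_of]⟩

def T : Matrix.SpecialLinearGroup (Fin 2) K1 :=
  ⟨!![1, 1; 0, 1], by simp [Matrix.det_fin_two_of]⟩

def Tω : Matrix.SpecialLinearGroup (Fin 2) K1 :=
  ⟨!![1, iK; 0, 1], by simp [Matrix.det_fin_two_of]⟩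

def L : Matrix.SpecialLinearGroup (Fin 2) K1 :=
  ⟨!![iK, 0; 0, -iK], by
    rw [Matrix.det_fin_two_of]
    refine Subtype.ext ?_
    push_cast [iK]
    simp [Complex.I_mul_I]⟩

def U : Matrix.SpecialLinearGroup (Fin 2) K1 := T * S

def E : Matrix.SpecialLinearGroup (Fin 2) K1 := Tω * S * L

/-- The fixed subspace `V^g` of `g ∈ SL₂(K)` acting on `V_{k,k}(ℂ)`. -/
def fixV (k : ℕ) (g : Matrix.SpecialLinearGroup (Fin 2) K1) : Submodule ℂ (Vkk k) :=
  LinearMap.ker ((1 : Module.End ℂ (Vkk k)) - vAct K1 k g)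

/-- The predicate "`γ ∈ SL₂(ℤ[i])`": all entries lie in `ℤ[i] ⊆ ℂ`. -/
def gammaInt (γ : Matrix.SpecialLinearGroup (Fin 2) K1) : Prop :=
  ∀ i j, ((γ : Matrix (Fin 2) (Fin 2) K1) i j : ℂ) ∈ Subring.closure {Complex.I}

end Stmt18

section ManinKernel

variable {K k} {pred : Matrix.SpecialLinearGroup (Fin 2) K → Prop}

lemma projAct_mul (g h : Matrix.SpecialLinearGroup (Fin 2) K) (x : ProjLine K) :
    projAct K (g * h) x = projAct K g (projAct K h x) := by
  induction x using Projectivization.ind with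
  | h v hv =>
    simp only [projAct, Projectivization.map_mk, Matrix.SpecialLinearGroup.coe_mul,
      Matrix.toLin'_mul_apply]

lemma projAct_one (x : ProjLine K) : projAct K 1 x = x := by
  induction x using Projectivization.ind with
  | h v hv => simp [projAct, Projectivization.map_mk]

lemma projAct_inv_projAct (g : Matrix.SpecialLinearGroup (Fin 2) K) (x : ProjLine K) :
    projAct K g⁻¹ (projAct K g x) = x := by
  rw [← projAct_mul, inv_mul_cancel, projAct_one]

lemma projAct_mk_eq_mk (g : Matrix.SpecialLinearGroup (Fin 2) K) {v w : Fin 2 → K}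
    (hv : v ≠ 0) (hw : w ≠ 0) (c : K) (h : (g : Matrix (Fin 2) (Fin 2) K).mulVec v = c • w) :
    projAct K g (Projectivization.mk K v hv) = Projectivization.mk K w hw := by
  rw [projAct, Projectivization.map_mk, Projectivization.mk_eq_mk_iff']
  exact ⟨c, by rw [← h, Matrix.toLin'_apply]⟩

variable (K) in
/-- The modular symbol `{α, β}`. -/
def modSymb (α β : ProjLine K) : ModSymb K :=
  Submodule.Quotient.mk (Finsupp.single (α, β) 1)

lemma modSymb_swap (α β : ProjLine K) : modSymb K β α = -modSymb K α β := by
  rw [eq_neg_iff_add_eq_zero]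
  exact (Submodule.Quotient.mk_eq_zero _).mpr (Submodule.subset_span (Or.inl ⟨β, α, rfl⟩))

lemma modSymb_add_add (α β γ : ProjLine K) :
    modSymb K α β + modSymb K β γ + modSymb K γ α = 0 :=
  (Submodule.Quotient.mk_eq_zero _).mpr (Submodule.subset_span (Or.inr ⟨α, β, γ, rfl⟩))

lemma symbAct_modSymb (g : Matrix.SpecialLinearGroup (Fin 2) K) (α β : ProjLine K) :
    symbAct K g (modSymb K α β) = modSymb K (projAct K g⁻¹ α) (projAct K g⁻¹ β) :=
  congrArg Submodule.Quotient.mk Finsupp.mapDomain_single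

lemma symbAct_modSymb_projAct (g : Matrix.SpecialLinearGroup (Fin 2) K) (α β : ProjLine K) :
    symbAct K g (modSymb K (projAct K g α) (projAct K g β)) = modSymb K α β := by
  rw [symbAct_modSymb, projAct_inv_projAct, projAct_inv_projAct]

lemma diagAct_tmul (g : Matrix.SpecialLinearGroup (Fin 2) K) (m : ModSymb K) (v : Vkk k) :
    diagAct K k g (m ⊗ₜ v) = (symbAct K g m ⊗ₜ vAct K k g v : ModSymb K ⊗[ℂ] Vkk k) :=
  TensorProduct.map_tmul _ _ _ _

variable (K k pred) in
/-- The pairing `(m, v) ↦ [m ⊗ v]` of `M₂` and `V_{k,k}(ℂ)` into the coinvariants. -/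
def coinvPairing : ModSymb K →ₗ[ℂ] Vkk k →ₗ[ℂ] Coinv K k pred :=
  (TensorProduct.mk ℂ (ModSymb K) (Vkk k)).compr₂ (coinvSub K k pred).mkQ

lemma ManinPhi_eq_coinvPairing (v : Vkk k) :
    ManinPhi K k pred v = coinvPairing K k pred (modSymb K (pt0 K) (ptInf K)) v :=
  rfl

lemma coinvPairing_symbAct {g : Matrix.SpecialLinearGroup (Fin 2) K} (hg : pred g)
    {v : Vkk k} (hv : vAct K k g v = v) (m : ModSymb K) :
    coinvPairing K k pred (symbAct K g m) v = coinvPairing K k pred m v := by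
  have hcoinv : (coinvSub K k pred).mkQ (m ⊗ₜ v) =
      (coinvSub K k pred).mkQ (diagAct K k g (m ⊗ₜ v)) :=
    (Submodule.Quotient.eq _).mpr (Submodule.subset_span ⟨g, hg, _, rfl⟩)
  rw [diagAct_tmul, hv] at hcoinv
  exact hcoinv.symm

lemma ManinPhi_eq_zero_of_swap {g : Matrix.SpecialLinearGroup (Fin 2) K} (hg : pred g)
    (h0 : projAct K g (pt0 K) = ptInf K) (hinf : projAct K g (ptInf K) = pt0 K)
    {v : Vkk k} (hv : vAct K k g v = v) : ManinPhi K k pred v = 0 := by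
  have hsymb : symbAct K g (modSymb K (pt0 K) (ptInf K)) = -modSymb K (pt0 K) (ptInf K) := by
    have h := symbAct_modSymb_projAct g (ptInf K) (pt0 K)
    rwa [hinf, h0, modSymb_swap (pt0 K) (ptInf K)] at h
  have hneg : ManinPhi K k pred v = -ManinPhi K k pred v := by
    rw [ManinPhi_eq_coinvPairing]
    conv_lhs => rw [← coinvPairing_symbAct hg hv, hsymb, map_neg, LinearMap.neg_apply]
  have htwo : (2 : ℂ) • ManinPhi K k pred v = 0 := by
    rw [two_smul]
    nth_rw 1 [hneg]
    exact neg_add_cancel _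
  exact (smul_eq_zero.mp htwo).resolve_left two_ne_zero

lemma ManinPhi_eq_zero_of_cycle {g : Matrix.SpecialLinearGroup (Fin 2) K} (hg : pred g)
    {p : ProjLine K} (h0 : projAct K g (pt0 K) = ptInf K) (hinf : projAct K g (ptInf K) = p)
    (hp : projAct K g p = pt0 K) {v : Vkk k} (hv : vAct K k g v = v) :
    ManinPhi K k pred v = 0 := by
  have h1 : symbAct K g (modSymb K (pt0 K) (ptInf K)) = modSymb K p (pt0 K) := by
    have h := symbAct_modSymb_projAct g p (pt0 K)
    rwa [hp, h0] at h
  have h2 : symbAct K g (modSymb K p (pt0 K)) = modSymb K (ptInf K) p := by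
    have h := symbAct_modSymb_projAct g (ptInf K) p
    rwa [hinf, hp] at h
  have e1 : coinvPairing K k pred (modSymb K p (pt0 K)) v = ManinPhi K k pred v := by
    rw [← h1, coinvPairing_symbAct hg hv, ManinPhi_eq_coinvPairing]
  have e2 : coinvPairing K k pred (modSymb K (ptInf K) p) v = ManinPhi K k pred v := by
    rw [← h2, coinvPairing_symbAct hg hv, e1]
  have hthree : (3 : ℂ) • ManinPhi K k pred v = 0 := by
    calc (3 : ℂ) • ManinPhi K k pred v
        = coinvPairing K k pred
            (modSymb K (pt0 K) (ptInf K) + modSymb K (ptInf K) p + modSymb K p (pt0 K)) v := by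
          rw [map_add, map_add, LinearMap.add_apply, LinearMap.add_apply, e1, e2,
            ← ManinPhi_eq_coinvPairing]
          module
      _ = 0 := by rw [modSymb_add_add, map_zero, LinearMap.zero_apply]
  exact (smul_eq_zero.mp hthree).resolve_left three_ne_zero

end ManinKernel

namespace Stmt18

lemma iK_mul_iK : iK * iK = -1 := Subtype.ext Complex.I_mul_I

lemma iK_mem_closure : ((iK : K1) : ℂ) ∈ Subring.closure {Complex.I} :=
  Subring.subset_closure rfl

lemma coe_S_mul_coe_L : (S : Matrix (Fin 2) (Fin 2) K1) * L = !![0, iK; iK, 0] := by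
  simp [S, L]

lemma coe_U : (U : Matrix (Fin 2) (Fin 2) K1) = !![1, -1; 1, 0] := by
  rw [U, Matrix.SpecialLinearGroup.coe_mul]
  simp [T, S]

lemma coe_E : (E : Matrix (Fin 2) (Fin 2) K1) = !![-1, iK; iK, 0] := by
  rw [E, Matrix.SpecialLinearGroup.coe_mul, Matrix.SpecialLinearGroup.coe_mul]
  simp [Tω, S, L, iK_mul_iK]

lemma gammaInt_S : gammaInt S := by
  simp [gammaInt, S, Fin.forall_fin_two]

lemma gammaInt_SL : gammaInt (S * L) := by
  simp [gammaInt, coe_S_mul_coe_L, Fin.forall_fin_two, iK_mem_closure]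

lemma gammaInt_U : gammaInt U := by
  simp [gammaInt, coe_U, Fin.forall_fin_two]

lemma gammaInt_E : gammaInt E := by
  simp [gammaInt, coe_E, Fin.forall_fin_two, iK_mem_closure]

def pt1 : ProjLine K1 := Projectivization.mk K1 ![1, 1] (by simp)

def ptI : ProjLine K1 := Projectivization.mk K1 ![iK, 1] (by simp)

lemma projAct_S_pt0 : projAct K1 S (pt0 K1) = ptInf K1 :=
  projAct_mk_eq_mk _ _ _ (-1) (by ext i; fin_cases i <;> simp [S, Matrix.mulVec, dotProduct])

lemma projAct_S_ptInf : projAct K1 S (ptInf K1) = pt0 K1 :=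
  projAct_mk_eq_mk _ _ _ 1 (by ext i; fin_cases i <;> simp [S, Matrix.mulVec, dotProduct])

lemma projAct_SL_pt0 : projAct K1 (S * L) (pt0 K1) = ptInf K1 :=
  projAct_mk_eq_mk _ _ _ iK
    (by ext i; fin_cases i <;> simp [coe_S_mul_coe_L, Matrix.mulVec, dotProduct])

lemma projAct_SL_ptInf : projAct K1 (S * L) (ptInf K1) = pt0 K1 :=
  projAct_mk_eq_mk _ _ _ iK
    (by ext i; fin_cases i <;> simp [coe_S_mul_coe_L, Matrix.mulVec, dotProduct])

lemma projAct_U_pt0 : projAct K1 U (pt0 K1) = ptInf K1 :=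
  projAct_mk_eq_mk _ _ _ (-1) (by ext i; fin_cases i <;> simp [coe_U, Matrix.mulVec, dotProduct])

lemma projAct_U_ptInf : projAct K1 U (ptInf K1) = pt1 :=
  projAct_mk_eq_mk _ _ _ 1 (by ext i; fin_cases i <;> simp [coe_U, Matrix.mulVec, dotProduct])

lemma projAct_U_pt1 : projAct K1 U pt1 = pt0 K1 :=
  projAct_mk_eq_mk _ _ _ 1 (by ext i; fin_cases i <;> simp [coe_U, Matrix.mulVec, dotProduct])

lemma projAct_E_pt0 : projAct K1 E (pt0 K1) = ptInf K1 :=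
  projAct_mk_eq_mk _ _ _ iK (by ext i; fin_cases i <;> simp [coe_E, Matrix.mulVec, dotProduct])

lemma projAct_E_ptInf : projAct K1 E (ptInf K1) = ptI :=
  projAct_mk_eq_mk _ _ _ iK
    (by ext i; fin_cases i <;> simp [coe_E, Matrix.mulVec, dotProduct, iK_mul_iK])

lemma projAct_E_ptI : projAct K1 E ptI = pt0 K1 :=
  projAct_mk_eq_mk _ _ _ (-1)
    (by ext i; fin_cases i <;> simp [coe_E, Matrix.mulVec, dotProduct, iK_mul_iK])

lemma vAct_eq_of_mem_fixV {k : ℕ} {g : Matrix.SpecialLinearGroup (Fin 2) K1} {v : Vkk k}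
    (hv : v ∈ fixV k g) : vAct K1 k g v = v :=
  (sub_eq_zero.mp (LinearMap.mem_ker.mp hv)).symm

/-- for `K = ℚ(i)`, `Γ = SL₂(ℤ[i])`, and every `k ≥ 0`, the subspace
`V^S + V^{SL} + V^U + V^E` of `V_{k,k}(ℂ)` is contained in the kernel of the Manin map `Φ`. -/
theorem sum_fixed_in_ker_Manin (k : ℕ) :
    ∀ v ∈ fixV k S ⊔ fixV k (S * L) ⊔ fixV k U ⊔ fixV k E,
      ManinPhi K1 k gammaInt v = 0 := by
  intro v hv
  rw [ManinPhi_eq_coinvPairing, ← LinearMap.mem_ker]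
  refine (show _ ≤ LinearMap.ker _ from sup_le (sup_le (sup_le ?_ ?_) ?_) ?_) hv <;>
    intro w hw <;> rw [LinearMap.mem_ker, ← ManinPhi_eq_coinvPairing]
  · exact ManinPhi_eq_zero_of_swap gammaInt_S projAct_S_pt0 projAct_S_ptInf
      (vAct_eq_of_mem_fixV hw)
  · exact ManinPhi_eq_zero_of_swap gammaInt_SL projAct_SL_pt0 projAct_SL_ptInf
      (vAct_eq_of_mem_fixV hw)
  · exact ManinPhi_eq_zero_of_cycle gammaInt_U projAct_U_pt0 projAct_U_ptInf projAct_U_pt1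
      (vAct_eq_of_mem_fixV hw)
  · exact ManinPhi_eq_zero_of_cycle gammaInt_E projAct_E_pt0 projAct_E_ptInf projAct_E_ptI
      (vAct_eq_of_mem_fixV hw)

end Stmt18
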